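/- For every u₁ ∈ F_n and all α, λ ∈ ℤ, the elements u₁ yᵅ and Φ_{−ε_y λ}(u₁) y^{α + λ(1−ε_y)} of G are φ-twisted conjugate; in particular, u₁ yᵅ ∼_φ u₁ y^{α + λ n (1−ε_y)} for all λ ∈ ℤ. -/

import Mathlib

open Fin.IntCast in
/-- The shift automorphism `Φ_s` of the free group `F_n`, sending `x_i` to `x_{[i-s]}`
(indices read modulo `n`). -/
def Phi (n : ℕ) [NeZero n] (s : ℤ) : FreeGroup (Fin n) ≃* FreeGroup (Fin n) :=
  FreeGroup.freeGroupCongr (Equiv.subRight ((s : Fin n)))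

/-- The action of `ℤ` on `F_n` by shifting: `t` acts as `Φ_t`. -/
def shiftAction (n : ℕ) [NeZero n] : Multiplicative ℤ →* MulAut (FreeGroup (Fin n)) :=
  zpowersHom (MulAut (FreeGroup (Fin n))) (Phi n 1)

/-- The group `G = F_n ⋊ ℤ`, in which `y⁻¹ xᵢ y = x_{[i+1]}`.  Every element is uniquely
`g₁ yᵗ` with `g₁ ∈ F_n` (the free component, `SemidirectProduct.left`) and `t ∈ ℤ`. -/
abbrev GSD (n : ℕ) [NeZero n] :=
  SemidirectProduct (FreeGroup (Fin n)) (Multiplicative ℤ) (shiftAction n)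

/-- The embedding of the free component `F_n` into `G`. -/
def fg (n : ℕ) [NeZero n] (w : FreeGroup (Fin n)) : GSD n := SemidirectProduct.inl w

/-- The generator `x_i` of `G`. -/
def xg (n : ℕ) [NeZero n] (i : Fin n) : GSD n := fg n (FreeGroup.of i)

/-- The generator `y` of `G`. -/
def yg (n : ℕ) [NeZero n] : GSD n := SemidirectProduct.inr (Multiplicative.ofAdd 1)

/-- The exponent sum of an element of the free group: image under the homomorphism
sending every generator to `1 ∈ ℤ`. -/
def expSum (n : ℕ) (w : FreeGroup (Fin n)) : ℤ :=
  Multiplicative.toAdd (FreeGroup.lift (fun _ => Multiplicative.ofAdd (1 : ℤ)) w)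

/-- `u` and `v` are `φ`-twisted conjugate: `v = φ(w)⁻¹ u w` for some `w ∈ G`. -/
def TwistedConj (n : ℕ) [NeZero n] (φ : GSD n ≃* GSD n) (u v : GSD n) : Prop :=
  ∃ w : GSD n, v = (φ w)⁻¹ * u * w

/-
Twisting by `w = y^λ` does it: `φ(y^λ) = y^{ε_y λ}`, and moving `y^{-ε_y λ}` past `u₁` applies
`Φ_{-ε_y λ}` to it, giving `φ(y^λ)⁻¹ (u₁ y^α) y^λ = Φ_{-ε_y λ}(u₁) y^{α + λ(1-ε_y)}`.
For the second claim take `λ n` instead of `λ`: `Φ_s` only depends on `s` modulo `n`.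
-/

namespace Phi

variable {n : ℕ} [NeZero n]

open Fin.IntCast Fin.CommRing

lemma eq_one_of_dvd {s : ℤ} (h : (n : ℤ) ∣ s) : Phi n s = 1 := by
  have hs : (s : Fin n) = 0 := by
    obtain ⟨k, rfl⟩ := h
    push_cast
    simp
  have : Equiv.subRight (s : Fin n) = Equiv.refl (Fin n) := by
    ext x; simp [hs]
  rw [Phi, this, FreeGroup.freeGroupCongr_refl]
  rfl

lemma mul_eq_add (a b : ℤ) : Phi n a * Phi n b = Phi n (a + b) := by
  change (Phi n b).trans (Phi n a) = Phi n (a + b)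
  have : (Equiv.subRight (b : Fin n)).trans (Equiv.subRight (a : Fin n)) =
      Equiv.subRight ((a + b : ℤ) : Fin n) := by
    ext x; push_cast; simp [sub_sub, add_comm]
  rw [Phi, Phi, Phi, FreeGroup.freeGroupCongr_trans, this]

lemma one_zpow (s : ℤ) : Phi n 1 ^ s = Phi n s := by
  induction s using Int.induction_on with
  | zero => exact (eq_one_of_dvd (dvd_zero _)).symm
  | succ k ih => rw [zpow_add_one, ih, mul_eq_add]
  | pred k ih => rw [zpow_sub_one, ih, mul_inv_eq_iff_eq_mul, mul_eq_add, sub_add_cancel]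

end Phi

section SemidirectProduct

variable {n : ℕ} [NeZero n]

lemma shiftAction_ofAdd (t : ℤ) : shiftAction n (Multiplicative.ofAdd t) = Phi n t := by
  rw [shiftAction, zpowersHom_apply, toAdd_ofAdd, Phi.one_zpow]

lemma yg_zpow (t : ℤ) : yg n ^ t = SemidirectProduct.inr (Multiplicative.ofAdd t) := by
  rw [yg, ← map_zpow, ← ofAdd_zsmul, smul_eq_mul, mul_one]

lemma yg_zpow_mul_fg (t : ℤ) (u : FreeGroup (Fin n)) :
    yg n ^ t * fg n u = fg n (Phi n t u) * yg n ^ t := by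
  rw [yg_zpow, fg, fg, ← shiftAction_ofAdd, SemidirectProduct.inl_aut, map_inv,
    inv_mul_cancel_right]

lemma twistedConj_mul_zpow_of_map_yg {ε : ℤ} {φ : GSD n ≃* GSD n} (hφy : φ (yg n) = yg n ^ ε)
    (u : FreeGroup (Fin n)) (α t : ℤ) :
    TwistedConj n φ (fg n u * yg n ^ α) (fg n (Phi n (-(ε * t)) u) * yg n ^ (α + t * (1 - ε))) := by
  refine ⟨yg n ^ t, ?_⟩
  rw [map_zpow, hφy, ← zpow_mul, ← zpow_neg, ← mul_assoc, yg_zpow_mul_fg, mul_assoc, mul_assoc,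
    ← zpow_add, ← zpow_add]
  congr 2
  ring

end SemidirectProduct

theorem statement_14_general (n : ℕ) [NeZero n] (εy : ℤ)
    (φ : GSD n ≃* GSD n)
    (hφy : φ (yg n) = yg n ^ εy) (u₁ : FreeGroup (Fin n)) (α lam : ℤ) :
    TwistedConj n φ (fg n u₁ * yg n ^ α)
      (fg n (Phi n (-(εy * lam)) u₁) * yg n ^ (α + lam * (1 - εy))) ∧
    TwistedConj n φ (fg n u₁ * yg n ^ α)
      (fg n u₁ * yg n ^ (α + lam * (n : ℤ) * (1 - εy))) := by
  refine ⟨twistedConj_mul_zpow_of_map_yg hφy u₁ α lam, ?_⟩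
  have h := twistedConj_mul_zpow_of_map_yg hφy u₁ α (lam * n)
  rwa [Phi.eq_one_of_dvd (Dvd.intro_left (-(εy * lam)) (by ring)), MulAut.one_apply] at h

/-- For every `u₁ ∈ F_n` and all `α, λ ∈ ℤ`, the elements `u₁ yᵅ` and
`Φ_{-ε_y λ}(u₁) y^{α + λ(1-ε_y)}` of `G` are `φ`-twisted conjugate; in particular
`u₁ yᵅ ∼_φ u₁ y^{α + λ n (1-ε_y)}`. -/
theorem statement_14 (n : ℕ) (hn : 2 ≤ n) [NeZero n] (εx εy d : ℤ)
    (hεx : εx = 1 ∨ εx = -1) (hεy : εy = 1 ∨ εy = -1)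
    (φ : GSD n ≃* GSD n) (hφx : φ (xg n 0) = xg n 0 ^ εx * yg n ^ d)
    (hφy : φ (yg n) = yg n ^ εy) (u₁ : FreeGroup (Fin n)) (α lam : ℤ) :
    TwistedConj n φ (fg n u₁ * yg n ^ α)
      (fg n (Phi n (-(εy * lam)) u₁) * yg n ^ (α + lam * (1 - εy))) ∧
    TwistedConj n φ (fg n u₁ * yg n ^ α)
      (fg n u₁ * yg n ^ (α + lam * (n : ℤ) * (1 - εy))) :=
  statement_14_general n εy φ hφy u₁ α lam
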